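/- arXiv:2204.07622 — 9 statements merged into one kernel-verified Lean document; each statement's English description precedes it below -/
import Mathlib

section
/- Let x, y be vectors in a complex inner product space with x ≠ 0 and y ≠ 0, and let θ = arccos(|⟨x,y⟩|/(‖x‖·‖y‖)). Then |⟨x,y⟩| ≤ (∫₀¹ |t·e^{iθ} + (1-t)·e^{-iθ}| dt)·‖x‖·‖y‖ ≤ ‖x‖·‖y‖. -/
theorem stmt2 {E : Type*} [NormedAddCommGroup E] [InnerProductSpace ℂ E]
    (x y : E) (hx : x ≠ 0) (hy : y ≠ 0) :
    let θ : ℝ := Real.arccos (‖(inner ℂ x y : ℂ)‖ / (‖x‖ * ‖y‖))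
    ‖(inner ℂ x y : ℂ)‖ ≤
      (∫ t in (0:ℝ)..1, ‖(t : ℂ) * Complex.exp ((θ : ℂ) * Complex.I) +
        (1 - (t : ℂ)) * Complex.exp (-(θ : ℂ) * Complex.I)‖) * (‖x‖ * ‖y‖) ∧
    (∫ t in (0:ℝ)..1, ‖(t : ℂ) * Complex.exp ((θ : ℂ) * Complex.I) +
        (1 - (t : ℂ)) * Complex.exp (-(θ : ℂ) * Complex.I)‖) * (‖x‖ * ‖y‖) ≤
      ‖x‖ * ‖y‖ := by
  intro θ
  set q : ℝ := ‖(inner ℂ x y : ℂ)‖ with hqdef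
  set N : ℝ := ‖x‖ * ‖y‖ with hN
  have hNpos : 0 < N := mul_pos (norm_pos_iff.mpr hx) (norm_pos_iff.mpr hy)
  have hq0 : 0 ≤ q := norm_nonneg _
  have hq1 : q ≤ N := by
    simpa [hqdef, hN] using norm_inner_le_norm (𝕜 := ℂ) x y
  have hcos : Real.cos θ = q / N := by
    apply Real.cos_arccos
    · linarith [div_nonneg hq0 hNpos.le]
    · exact div_le_one_of_le₀ hq1 hNpos.le
  set f : ℝ → ℝ := fun t => ‖(t : ℂ) * Complex.exp ((θ : ℂ) * Complex.I) +
        (1 - (t : ℂ)) * Complex.exp (-(θ : ℂ) * Complex.I)‖ with hf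
  have hcont : Continuous f := continuous_norm.comp (by fun_prop)
  have hre : ∀ t : ℝ, ((t : ℂ) * Complex.exp ((θ : ℂ) * Complex.I) +
        (1 - (t : ℂ)) * Complex.exp (-(θ : ℂ) * Complex.I)).re = Real.cos θ := by
    intro t
    have h1 : Complex.exp ((θ : ℂ) * Complex.I) = Real.cos θ + Real.sin θ * Complex.I := by
      rw [Complex.exp_mul_I]; push_cast; ring
    have h2 : Complex.exp (-(θ : ℂ) * Complex.I) = Real.cos θ - Real.sin θ * Complex.I := by
      rw [Complex.exp_mul_I]; push_cast [Complex.cos_neg, Complex.sin_neg]; ring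
    rw [h1, h2]
    simp [Complex.add_re, Complex.mul_re, Complex.sub_re, Complex.cos_ofReal_re]
    ring
  have hlow : ∀ t ∈ Set.Icc (0:ℝ) 1, Real.cos θ ≤ f t := by
    intro t _
    calc Real.cos θ = _ := (hre t).symm
    _ ≤ f t := Complex.re_le_norm _
  have hupp : ∀ t ∈ Set.Icc (0:ℝ) 1, f t ≤ 1 := by
    intro t ht
    have : f t ≤ ‖(t : ℂ) * Complex.exp ((θ : ℂ) * Complex.I)‖ +
        ‖(1 - (t : ℂ)) * Complex.exp (-(θ : ℂ) * Complex.I)‖ :=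
      norm_add_le _ _
    have e1 : ‖Complex.exp ((θ : ℂ) * Complex.I)‖ = 1 := by
      simpa using Complex.norm_exp_ofReal_mul_I θ
    have e2 : ‖Complex.exp (-(θ : ℂ) * Complex.I)‖ = 1 := by
      have : (-(θ : ℂ)) = ((-θ : ℝ) : ℂ) := by push_cast; ring
      rw [this]; exact Complex.norm_exp_ofReal_mul_I (-θ)
    have a1 : ‖(t : ℂ)‖ = t := by
      rw [Complex.norm_real, Real.norm_eq_abs, abs_of_nonneg ht.1]
    have a2 : ‖1 - (t : ℂ)‖ = 1 - t := by
      have : (1 - (t : ℂ)) = ((1 - t : ℝ) : ℂ) := by push_cast; ring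
      rw [this, Complex.norm_real, Real.norm_eq_abs, abs_of_nonneg (by linarith [ht.2])]
    calc f t ≤ _ := this
    _ = t + (1 - t) := by rw [norm_mul, norm_mul, e1, e2, a1, a2]; ring
    _ = 1 := by ring
  have hint : IntervalIntegrable f MeasureTheory.volume 0 1 :=
    hcont.intervalIntegrable 0 1
  have hI1 : Real.cos θ ≤ ∫ t in (0:ℝ)..1, f t := by
    have := intervalIntegral.integral_mono_on (by norm_num : (0:ℝ) ≤ 1)
      (intervalIntegrable_const) hint hlow
    simpa using this
  have hI2 : (∫ t in (0:ℝ)..1, f t) ≤ 1 := by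
    have := intervalIntegral.integral_mono_on (by norm_num : (0:ℝ) ≤ 1)
      hint (intervalIntegrable_const) hupp
    simpa using this
  constructor
  · have : Real.cos θ * N ≤ (∫ t in (0:ℝ)..1, f t) * N :=
      mul_le_mul_of_nonneg_right hI1 hNpos.le
    rw [hcos, div_mul_cancel₀ _ hNpos.ne'] at this
    exact this
  · calc (∫ t in (0:ℝ)..1, f t) * N ≤ 1 * N :=
        mul_le_mul_of_nonneg_right hI2 hNpos.le
    _ = N := one_mul N
end

section
/- Define μ(θ) = (1/4)·(2 + cos θ · cot θ · log((1+sin θ)/(1-sin θ))) for θ ∈ (0, π). Then μ is decreasing on (0, π/2] and increasing on [π/2, π). -/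
noncomputable def mu (θ : ℝ) : ℝ :=
  (1 / 4) * (2 + Real.cos θ * (Real.cos θ / Real.sin θ) *
    Real.log ((1 + Real.sin θ) / (1 - Real.sin θ)))

/-- The key logarithm inequality: `2s ≤ log(1+s) - log(1-s)` for `0 ≤ s < 1`. -/
lemma aux_log_ineq (s : ℝ) (h0 : 0 ≤ s) (h1 : s < 1) :
    2 * s ≤ Real.log (1 + s) - Real.log (1 - s) := by
  set h : ℝ → ℝ := fun u => Real.log (1 + u) - Real.log (1 - u) - 2 * u with hh
  have key : ∀ t ∈ Set.Ioo (0:ℝ) 1,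
      HasDerivAt h (1 / (1 + t) + 1 / (1 - t) - 2) t := by
    intro t ht
    have h1t : (0:ℝ) < 1 + t := by linarith [ht.1]
    have h2t : (0:ℝ) < 1 - t := by linarith [ht.2]
    have d1 : HasDerivAt (fun u : ℝ => Real.log (1 + u)) (1 / (1 + t)) t := by
      have := ((hasDerivAt_id t).const_add 1).log h1t.ne'
      simpa using this
    have d2 : HasDerivAt (fun u : ℝ => Real.log (1 - u)) (-1 / (1 - t)) t := by
      have := ((hasDerivAt_id t).const_sub 1).log h2t.ne'
      simpa using this
    have d3 : HasDerivAt (fun u : ℝ => 2 * u) 2 t := by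
      simpa using (hasDerivAt_id t).const_mul 2
    have := (d1.sub d2).sub d3
    refine this.congr_deriv ?_
    ring
  have hmono : MonotoneOn h (Set.Ico (0:ℝ) 1) := by
    apply monotoneOn_of_deriv_nonneg (convex_Ico 0 1)
    · -- continuity
      intro t ht
      rcases eq_or_lt_of_le ht.1 with rfl | htpos
      · -- t = 0
        have : ContinuousAt h 0 := by
          have h1t : (0:ℝ) < 1 + 0 := by norm_num
          have h2t : (0:ℝ) < 1 - 0 := by norm_num
          apply ContinuousAt.sub
          apply ContinuousAt.sub
          · exact (Real.continuousAt_log (by norm_num)).comp (by fun_prop)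
          · exact (Real.continuousAt_log (by norm_num)).comp (by fun_prop)
          · fun_prop
        exact this.continuousWithinAt
      · exact ((key t ⟨htpos, ht.2⟩).continuousAt).continuousWithinAt
    · intro t ht
      rw [interior_Ico] at ht
      exact ((key t ht).differentiableAt).differentiableWithinAt
    · intro t ht
      rw [interior_Ico] at ht
      rw [(key t ht).deriv]
      have h1t : (0:ℝ) < 1 + t := by linarith [ht.1]
      have h2t : (0:ℝ) < 1 - t := by linarith [ht.2]
      rw [div_add_div _ _ h1t.ne' h2t.ne', sub_nonneg, le_div_iff₀ (by positivity)]
      nlinarith [sq_nonneg t, ht.1]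
  have h0' : h 0 = 0 := by simp [hh]
  have := hmono (Set.mem_Ico.2 ⟨le_refl 0, by norm_num⟩) (Set.mem_Ico.2 ⟨h0, h1⟩) h0
  rw [h0'] at this
  simp only [hh] at this
  linarith

noncomputable def fmu (s : ℝ) : ℝ :=
  (1 / 4) * (2 + (1 - s ^ 2) * s⁻¹ * (Real.log (1 + s) - Real.log (1 - s)))

lemma fmu_hasDeriv (t : ℝ) (ht : t ∈ Set.Ioo (0:ℝ) 1) :
    HasDerivAt fmu ((1 / 4) * ((-(2 * t) * t⁻¹ + (1 - t ^ 2) * (-(t ^ 2)⁻¹)) *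
      (Real.log (1 + t) - Real.log (1 - t)) +
      (1 - t ^ 2) * t⁻¹ * (1 / (1 + t) + 1 / (1 - t)))) t := by
  have h1t : (0:ℝ) < 1 + t := by linarith [ht.1]
  have h2t : (0:ℝ) < 1 - t := by linarith [ht.2]
  have du : HasDerivAt (fun u : ℝ => (1 - u ^ 2) * u⁻¹)
      (-(2 * t) * t⁻¹ + (1 - t ^ 2) * (-(t ^ 2)⁻¹)) t := by
    have p : HasDerivAt (fun u : ℝ => 1 - u ^ 2) (-(2 * t)) t := by
      simpa using (hasDerivAt_pow 2 t).const_sub 1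
    exact p.mul (hasDerivAt_inv ht.1.ne')
  have dv : HasDerivAt (fun u : ℝ => Real.log (1 + u) - Real.log (1 - u))
      (1 / (1 + t) + 1 / (1 - t)) t := by
    have d1 : HasDerivAt (fun u : ℝ => Real.log (1 + u)) (1 / (1 + t)) t := by
      have := ((hasDerivAt_id t).const_add 1).log h1t.ne'
      simpa using this
    have d2 : HasDerivAt (fun u : ℝ => Real.log (1 - u)) (-1 / (1 - t)) t := by
      have := ((hasDerivAt_id t).const_sub 1).log h2t.ne'
      simpa using this
    have := d1.sub d2
    refine this.congr_deriv ?_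
    ring
  have H := ((du.mul dv).const_add 2).const_mul (1 / 4 : ℝ)
  have hfun : fmu = fun y : ℝ => (1 / 4 : ℝ) * (2 + (1 - y ^ 2) * y⁻¹ *
      (Real.log (1 + y) - Real.log (1 - y))) := rfl
  rw [hfun]
  exact H

lemma fmu_anti : AntitoneOn fmu (Set.Ioo (0:ℝ) 1) := by
  apply antitoneOn_of_deriv_nonpos (convex_Ioo 0 1)
  · intro t ht
    exact ((fmu_hasDeriv t ht).continuousAt).continuousWithinAt
  · intro t ht
    rw [interior_Ioo] at ht
    exact ((fmu_hasDeriv t ht).differentiableAt).differentiableWithinAt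
  · intro t ht
    rw [interior_Ioo] at ht
    rw [(fmu_hasDeriv t ht).deriv]
    have h1t : (0:ℝ) < 1 + t := by linarith [ht.1]
    have h2t : (0:ℝ) < 1 - t := by linarith [ht.2]
    have ht0 := ht.1
    set V := Real.log (1 + t) - Real.log (1 - t) with hV
    have hV2 : 2 * t ≤ V := aux_log_ineq t ht0.le ht.2
    have hVpos : 0 ≤ V := le_trans (by positivity) hV2
    have hsimp : (1 / 4 : ℝ) * ((-(2 * t) * t⁻¹ + (1 - t ^ 2) * (-(t ^ 2)⁻¹)) * V +
        (1 - t ^ 2) * t⁻¹ * (1 / (1 + t) + 1 / (1 - t)))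
        = (1 / 4) * (2 / t - (1 + t ^ 2) * V / t ^ 2) := by
      field_simp
      ring
    rw [hsimp]
    have hmain : 2 / t ≤ (1 + t ^ 2) * V / t ^ 2 := by
      rw [div_le_div_iff₀ ht0 (by positivity)]
      nlinarith [mul_nonneg (sq_nonneg t) hVpos]
    linarith

lemma mu_eq_fmu (θ : ℝ) (hθ : θ ∈ Set.Ioo 0 (Real.pi / 2)) : mu θ = fmu (Real.sin θ) := by
  have hs : 0 < Real.sin θ := Real.sin_pos_of_pos_of_lt_pi hθ.1
    (lt_trans hθ.2 (by linarith [Real.pi_pos]))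
  have hc : 0 < Real.cos θ := Real.cos_pos_of_mem_Ioo
    ⟨by linarith [hθ.1, Real.pi_pos], hθ.2⟩
  have hs1 : Real.sin θ < 1 := by
    nlinarith [Real.sin_sq_add_cos_sq θ, hs]
  have h1p : (0:ℝ) < 1 + Real.sin θ := by linarith
  have h1m : (0:ℝ) < 1 - Real.sin θ := by linarith
  have hcos2 : Real.cos θ ^ 2 = 1 - Real.sin θ ^ 2 := by
    nlinarith [Real.sin_sq_add_cos_sq θ]
  unfold mu fmu
  rw [Real.log_div h1p.ne' h1m.ne']
  rw [show Real.cos θ * (Real.cos θ / Real.sin θ) = Real.cos θ ^ 2 * (Real.sin θ)⁻¹ by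
    field_simp, hcos2]

lemma mu_symm (θ : ℝ) : mu (Real.pi - θ) = mu θ := by
  unfold mu
  rw [Real.sin_pi_sub, Real.cos_pi_sub]
  ring_nf

lemma mu_half_le (θ : ℝ) (h0 : 0 < θ) (h2 : θ ≤ Real.pi / 2) : mu (Real.pi / 2) ≤ mu θ := by
  have hmupi : mu (Real.pi / 2) = 1 / 2 := by
    unfold mu
    simp [Real.cos_pi_div_two]
    norm_num
  rw [hmupi]
  have hs : 0 < Real.sin θ := Real.sin_pos_of_pos_of_lt_pi h0
    (lt_of_le_of_lt h2 (by linarith [Real.pi_pos]))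
  have hs1 : Real.sin θ ≤ 1 := Real.sin_le_one θ
  have hterm : 0 ≤ Real.cos θ * (Real.cos θ / Real.sin θ) *
      Real.log ((1 + Real.sin θ) / (1 - Real.sin θ)) := by
    rcases eq_or_lt_of_le hs1 with heq | hlt
    · rw [heq]
      simp
    · apply mul_nonneg
      · have : Real.cos θ * (Real.cos θ / Real.sin θ) = Real.cos θ ^ 2 / Real.sin θ := by
          ring
        rw [this]
        positivity
      · apply Real.log_nonneg
        rw [le_div_iff₀ (by linarith)]
        linarith
  unfold mu
  linarith

theorem stmt9 :
    AntitoneOn mu (Set.Ioc 0 (Real.pi / 2)) ∧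
    MonotoneOn mu (Set.Ico (Real.pi / 2) Real.pi) := by
  have hanti : AntitoneOn mu (Set.Ioc 0 (Real.pi / 2)) := by
    intro x hx y hy hxy
    rcases eq_or_lt_of_le hy.2 with heq | hlt
    · rw [heq]
      exact mu_half_le x hx.1 hx.2
    · -- y < π/2, hence x < π/2 too
      have hx' : x ∈ Set.Ioo 0 (Real.pi / 2) := ⟨hx.1, lt_of_le_of_lt hxy hlt⟩
      have hy' : y ∈ Set.Ioo 0 (Real.pi / 2) := ⟨hy.1, hlt⟩
      rw [mu_eq_fmu x hx', mu_eq_fmu y hy']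
      have hsinmem : ∀ z ∈ Set.Ioo 0 (Real.pi / 2), Real.sin z ∈ Set.Ioo (0:ℝ) 1 := by
        intro z hz
        have hs : 0 < Real.sin z := Real.sin_pos_of_pos_of_lt_pi hz.1
          (lt_trans hz.2 (by linarith [Real.pi_pos]))
        have hc : 0 < Real.cos z := Real.cos_pos_of_mem_Ioo
          ⟨by linarith [hz.1, Real.pi_pos], hz.2⟩
        have : Real.sin z < 1 := by nlinarith [Real.sin_sq_add_cos_sq z, hs]
        exact ⟨hs, this⟩
      apply fmu_anti (hsinmem x hx') (hsinmem y hy')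
      apply Real.strictMonoOn_sin.monotoneOn ⟨by linarith [hx'.1, Real.pi_pos], hx'.2.le⟩
        ⟨by linarith [hy'.1, Real.pi_pos], hy'.2.le⟩ hxy
  refine ⟨hanti, ?_⟩
  intro x hx y hy hxy
  rw [← mu_symm x, ← mu_symm y]
  have hx' : Real.pi - x ∈ Set.Ioc 0 (Real.pi / 2) := ⟨by linarith [hx.2], by linarith [hx.1]⟩
  have hy' : Real.pi - y ∈ Set.Ioc 0 (Real.pi / 2) := ⟨by linarith [hy.2], by linarith [hy.1]⟩
  exact hanti hy' hx' (by linarith)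
end

section
/- Define μ(θ) = (1/4)·(2 + cos θ · cot θ · log((1+sin θ)/(1-sin θ))) for θ ∈ (0, π). Then 1/2 ≤ μ(θ) ≤ 1 for all θ ∈ (0, π). -/
theorem stmt10 (θ : ℝ) (hθ : θ ∈ Set.Ioo 0 Real.pi) :
    1 / 2 ≤ mu θ ∧ mu θ ≤ 1 := by
  obtain ⟨h0, hp⟩ := hθ
  set s := Real.sin θ with hs_def
  have hs : 0 < s := Real.sin_pos_of_pos_of_lt_pi h0 hp
  have hs1 : s ≤ 1 := Real.sin_le_one θ
  have hc : Real.cos θ ^ 2 = 1 - s ^ 2 := Real.cos_sq' θ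
  rcases eq_or_lt_of_le hs1 with heq | hlt
  · -- s = 1, so cos θ = 0
    have hc0 : Real.cos θ = 0 := by
      have : Real.cos θ ^ 2 = 0 := by rw [hc]; nlinarith
      exact pow_eq_zero_iff (n := 2) (by norm_num) |>.mp this
    simp [mu, hc0]
    norm_num
  · -- s < 1
    have h1s : 0 < 1 - s := by linarith
    set x := (1 + s) / (1 - s) with hx_def
    have hx1 : 1 ≤ x := by
      rw [le_div_iff₀ h1s]; linarith
    have hx0 : 0 < x := lt_of_lt_of_le one_pos hx1
    set L := Real.log x with hL_def
    have hL0 : 0 ≤ L := Real.log_nonneg hx1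
    have hLsinh : L ≤ Real.sinh L := by
      exact Real.self_le_sinh_iff.mpr hL0
    have hsinh : Real.sinh L = (x - x⁻¹) / 2 := Real.sinh_log hx0
    have hxval : (x - x⁻¹) / 2 = 2 * s / (1 - s ^ 2) := by
      have h1 : (1 : ℝ) - s ≠ 0 := ne_of_gt h1s
      have h2 : (1 : ℝ) + s ≠ 0 := by positivity
      have h3 : (1 : ℝ) - s ^ 2 ≠ 0 := by nlinarith
      rw [hx_def, inv_div]
      field_simp
      ring
    have hL : (1 - s ^ 2) * L ≤ 2 * s := by
      have h2 : 0 < 1 - s ^ 2 := by nlinarith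
      have : L ≤ 2 * s / (1 - s ^ 2) := by
        rw [← hxval, ← hsinh]; exact hLsinh
      calc (1 - s ^ 2) * L ≤ (1 - s ^ 2) * (2 * s / (1 - s ^ 2)) :=
            mul_le_mul_of_nonneg_left this (le_of_lt h2)
        _ = 2 * s := by field_simp
    have key : Real.cos θ * (Real.cos θ / s) * L = Real.cos θ ^ 2 * L / s := by
      ring
    constructor
    · have : 0 ≤ Real.cos θ ^ 2 * L / s := by positivity
      rw [mu, key]
      linarith
    · rw [mu, key, hc]
      have : (1 - s ^ 2) * L / s ≤ 2 := by
        rw [div_le_iff₀ hs]; linarith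
      linarith
end

section
/- Define ν(θ) = 4·sin θ - 2·(sin²θ + 1)·log((1+sin θ)/(1-sin θ)). Then ν(θ) ≤ 0 for all θ ∈ (0, π). -/
lemma key_log_bound (x : ℝ) (hx0 : 0 ≤ x) (hx1 : x < 1) :
    2 * x ≤ Real.log (1 + x) - Real.log (1 - x) := by
  set f : ℝ → ℝ := fun y => Real.log (1 + y) - Real.log (1 - y) - 2 * y with hf
  have hcont : ContinuousOn f (Set.Icc 0 x) := by
    apply ContinuousOn.sub
    apply ContinuousOn.sub
    · exact (Real.continuousOn_log.comp (continuous_const.add continuous_id).continuousOn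
        (fun y hy => by
          have := hy.1
          simp only [Set.mem_compl_iff, Set.mem_singleton_iff]
          intro h; nlinarith))
    · exact (Real.continuousOn_log.comp (continuous_const.sub continuous_id).continuousOn
        (fun y hy => by
          have := hy.2
          simp only [Set.mem_compl_iff, Set.mem_singleton_iff]
          intro h; nlinarith))
    · exact (continuous_const.mul continuous_id).continuousOn
  have hderiv : ∀ y ∈ Set.Ioo (0:ℝ) x, HasDerivAt f (1/(1+y) + 1/(1-y) - 2) y := by
    intro y hy
    have h1 : (0:ℝ) < 1 + y := by linarith [hy.1]
    have h2 : (0:ℝ) < 1 - y := by linarith [hy.2, hx1]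
    have A : HasDerivAt (fun y : ℝ => Real.log (1 + y)) (1/(1+y)) y := by
      have := (Real.hasDerivAt_log h1.ne').comp y ((hasDerivAt_id y).const_add 1)
      simpa [one_div, Function.comp_def] using this
    have B : HasDerivAt (fun y : ℝ => Real.log (1 - y)) (-(1/(1-y))) y := by
      have := (Real.hasDerivAt_log h2.ne').comp y ((hasDerivAt_id y).const_sub 1)
      simpa [one_div, Function.comp_def] using this
    have C : HasDerivAt (fun y : ℝ => 2 * y) 2 y := by
      simpa using (hasDerivAt_id y).const_mul 2
    have := (A.sub B).sub C
    refine this.congr_deriv ?_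
    ring
  have hmono : MonotoneOn f (Set.Icc 0 x) := by
    rcases eq_or_lt_of_le hx0 with h | h
    · intro a ha b hb hab
      have : a = 0 := le_antisymm (by simpa [← h] using ha.2) ha.1
      have : b = 0 := le_antisymm (by simpa [← h] using hb.2) hb.1
      simp_all
    · apply monotoneOn_of_deriv_nonneg (convex_Icc 0 x) hcont
      · intro y hy
        rw [interior_Icc] at hy
        exact (hderiv y hy).differentiableAt.differentiableWithinAt
      · intro y hy
        rw [interior_Icc] at hy
        rw [(hderiv y hy).deriv]
        have h1 : (0:ℝ) < 1 + y := by linarith [hy.1]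
        have h2 : (0:ℝ) < 1 - y := by linarith [hy.2, hx1]
        rw [div_add_div _ _ h1.ne' h2.ne', sub_nonneg, le_div_iff₀ (by positivity)]
        nlinarith [hy.1]
  have h0 : f 0 = 0 := by simp [hf]
  have := hmono (Set.left_mem_Icc.2 hx0) (Set.right_mem_Icc.2 hx0) hx0
  rw [h0] at this
  simp only [hf] at this
  linarith

theorem stmt11 (θ : ℝ) (hθ : θ ∈ Set.Ioo 0 Real.pi) (hθ' : θ ≠ Real.pi / 2) :
    4 * Real.sin θ - 2 * (Real.sin θ ^ 2 + 1) *
      Real.log ((1 + Real.sin θ) / (1 - Real.sin θ)) ≤ 0 := by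
  obtain ⟨h0, hπ⟩ := hθ
  set x := Real.sin θ with hx
  have hx0 : 0 < x := Real.sin_pos_of_pos_of_lt_pi h0 hπ
  have hx1 : x < 1 := by
    rcases lt_or_eq_of_le (Real.sin_le_one θ) with h | h
    · exact h
    · exfalso
      obtain ⟨k, hk⟩ := Real.sin_eq_one_iff.1 h
      have hpi := Real.pi_pos
      have hk0 : (k : ℝ) = 0 := by
        have h1 : -1 < (k:ℝ) := by nlinarith
        have h2 : (k:ℝ) < 1 := by nlinarith
        have h1' : (-1:ℤ) < k := by exact_mod_cast h1
        have h2' : (k:ℤ) < 1 := by exact_mod_cast h2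
        have : k = 0 := by omega
        exact_mod_cast this
      rw [hk0] at hk
      apply hθ'; linarith
  have h1 : (0:ℝ) < 1 + x := by linarith
  have h2 : (0:ℝ) < 1 - x := by linarith
  have hlog : 2 * x ≤ Real.log ((1 + x) / (1 - x)) := by
    rw [Real.log_div h1.ne' h2.ne']
    exact key_log_bound x hx0.le hx1
  nlinarith [hlog, sq_nonneg x, mul_nonneg (sq_nonneg x) (le_trans (by linarith) hlog)]
end

section
/- Let A be a bounded linear operator on a complex Hilbert space H with polar decomposition A = U|A| (U a partial isometry), let v ∈ [0,1], and let x, y ∈ H be such that |A|^v x ≠ 0 and |A|^{1-v} U* y ≠ 0. Let θ be the angle between |A|^v x and |A|^{1-v} U* y, i.e., θ = arccos(|⟨|A|^v x, |A|^{1-v} U* y⟩| / (‖|A|^v x‖·‖|A|^{1-v} U* y‖)), and let μ(θ) = ∫₀¹ √(cos²θ + (2t-1)²·sin²θ) dt. Then |⟨Ax, y⟩| ≤ μ(θ)·√(⟨|A|^{2v} x, x⟩·⟨|A*|^{2(1-v)} y, y⟩). -/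
set_option synthInstance.maxHeartbeats 1000000
set_option maxHeartbeats 1000000

lemma rpow_contOn {S : Set ℝ} (hS : S ⊆ Set.Ici 0) (w : ℝ) (hw : 0 ≤ w) :
    ContinuousOn (fun s : ℝ => s ^ w) S := by
  rcases eq_or_lt_of_le hw with h | h
  · simp only [← h, Real.rpow_zero]
    exact continuousOn_const
  · exact fun s _ => (Real.continuousAt_rpow_const s w (Or.inr h.le)).continuousWithinAt

open ContinuousLinearMap in
theorem stmt12 {H : Type*} [NormedAddCommGroup H] [InnerProductSpace ℂ H]
    [CompleteSpace H]
    (A U : H →L[ℂ] H) (v : ℝ) (hv : v ∈ Set.Icc (0:ℝ) 1)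
    (absA : H →L[ℂ] H) (habs : absA = CFC.sqrt (adjoint A * A))
    (hpolar : A = U * absA)
    (hU : adjoint U * U * absA = absA)  -- U is a partial isometry with initial space ran |A|
    (x y : H)
    (hx : cfc (fun s : ℝ => s ^ v) absA x ≠ 0)
    (hy : cfc (fun s : ℝ => s ^ (1 - v)) absA (adjoint U y) ≠ 0) :
    let θ : ℝ := Real.arccos
      (‖(inner ℂ (cfc (fun s : ℝ => s ^ v) absA x)
          (cfc (fun s : ℝ => s ^ (1 - v)) absA (adjoint U y)) : ℂ)‖ /
        (‖cfc (fun s : ℝ => s ^ v) absA x‖ *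
          ‖cfc (fun s : ℝ => s ^ (1 - v)) absA (adjoint U y)‖))
    ‖(inner ℂ (A x) y : ℂ)‖ ≤
      (∫ t in (0:ℝ)..1, Real.sqrt (Real.cos θ ^ 2 + (2 * t - 1) ^ 2 * Real.sin θ ^ 2)) *
        Real.sqrt ((inner ℂ (cfc (fun s : ℝ => s ^ (2 * v)) absA x) x : ℂ).re *
          (inner ℂ ((U * cfc (fun s : ℝ => s ^ (2 * (1 - v))) absA * adjoint U) y) y : ℂ).re) := by
  intro θ
  obtain ⟨hv0, hv1⟩ := hv
  have hv1' : (0:ℝ) ≤ 1 - v := by linarith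
  have hT0 : (0 : H →L[ℂ] H) ≤ absA := by
    rw [habs]; exact CFC.sqrt_nonneg _
  have hTsa : IsSelfAdjoint absA := hT0.isSelfAdjoint
  have hspec : spectrum ℝ absA ⊆ Set.Ici 0 := fun s hs => spectrum_nonneg_of_nonneg hT0 hs
  set a : H := cfc (fun s : ℝ => s ^ v) absA x with ha
  set b : H := cfc (fun s : ℝ => s ^ (1 - v)) absA (adjoint U y) with hb
  -- self-adjointness of cfc operators
  have sa : ∀ f : ℝ → ℝ, ∀ u w : H,
      (inner ℂ (cfc f absA u) w : ℂ) = inner ℂ u (cfc f absA w) := by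
    intro f u w
    have h : IsSelfAdjoint (cfc f absA) := cfc_predicate f absA
    have := adjoint_inner_left (cfc f absA) w u
    rwa [← star_eq_adjoint, h.star_eq] at this
  have saT : ∀ u w : H, (inner ℂ (absA u) w : ℂ) = inner ℂ u (absA w) := by
    intro u w
    have := adjoint_inner_left absA w u
    rwa [← star_eq_adjoint, hTsa.star_eq] at this
  -- product rules
  have hmul : ∀ w₁ w₂ : ℝ, 0 ≤ w₁ → 0 ≤ w₂ →
      cfc (fun s : ℝ => s ^ w₁) absA * cfc (fun s : ℝ => s ^ w₂) absA
        = cfc (fun s : ℝ => s ^ (w₁ + w₂)) absA := by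
    intro w₁ w₂ h₁ h₂
    rw [← cfc_mul _ _ absA (rpow_contOn hspec _ h₁) (rpow_contOn hspec _ h₂)]
    exact cfc_congr fun s hs =>
      (Real.rpow_add_of_nonneg (hspec hs) h₁ h₂).symm
  have hcomb : cfc (fun s : ℝ => s ^ v) absA * cfc (fun s : ℝ => s ^ (1 - v)) absA = absA := by
    rw [hmul v (1 - v) hv0 hv1']
    have h1 : (fun s : ℝ => s ^ (v + (1 - v))) = fun s : ℝ => s ^ (1:ℝ) := by norm_num
    rw [h1]
    simp only [Real.rpow_one]
    exact cfc_id' ℝ absA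
  -- ⟨A x, y⟩ = ⟨a, b⟩
  have key : (inner ℂ (A x) y : ℂ) = inner ℂ a b := by
    rw [ha, hb, sa, ← ContinuousLinearMap.mul_apply, hcomb]
    calc (inner ℂ (A x) y : ℂ) = inner ℂ (U (absA x)) y := by rw [hpolar]; rfl
      _ = inner ℂ (absA x) (adjoint U y) := (adjoint_inner_right U (absA x) y).symm
      _ = inner ℂ x (absA (adjoint U y)) := saT x _
  -- norms
  have hna : ((inner ℂ (cfc (fun s : ℝ => s ^ (2 * v)) absA x) x : ℂ)).re = ‖a‖ ^ 2 := by
    have h2 : cfc (fun s : ℝ => s ^ (2 * v)) absA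
        = cfc (fun s : ℝ => s ^ v) absA * cfc (fun s : ℝ => s ^ v) absA := by
      rw [hmul v v hv0 hv0]; congr 1; ext s; ring_nf
    rw [h2, ContinuousLinearMap.mul_apply, sa, ← ha, ← inner_self_eq_norm_sq (𝕜 := ℂ)]
    rfl
  have hnb : ((inner ℂ ((U * cfc (fun s : ℝ => s ^ (2 * (1 - v))) absA * adjoint U) y) y : ℂ)).re = ‖b‖ ^ 2 := by
    have h2 : cfc (fun s : ℝ => s ^ (2 * (1 - v))) absA
        = cfc (fun s : ℝ => s ^ (1 - v)) absA * cfc (fun s : ℝ => s ^ (1 - v)) absA := by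
      rw [hmul _ _ hv1' hv1']; congr 1; ext s; ring_nf
    simp only [ContinuousLinearMap.mul_apply, h2]
    rw [← adjoint_inner_right U, sa, ← hb, ← inner_self_eq_norm_sq (𝕜 := ℂ)]
    rfl
  -- numerics
  have hapos : 0 < ‖a‖ := norm_pos_iff.mpr hx
  have hbpos : 0 < ‖b‖ := norm_pos_iff.mpr hy
  set r : ℝ := ‖(inner ℂ a b : ℂ)‖ / (‖a‖ * ‖b‖) with hr
  have hab : ‖(inner ℂ a b : ℂ)‖ ≤ ‖a‖ * ‖b‖ := by
    exact norm_inner_le_norm a b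
  have hr0 : (0:ℝ) ≤ r := by positivity
  have hr1 : r ≤ 1 := (div_le_one (by positivity)).mpr hab
  have hθ : θ = Real.arccos r := rfl
  have hcos : Real.cos θ = r := by rw [hθ]; exact Real.cos_arccos (by linarith) hr1
  have hint : IntervalIntegrable
      (fun t => Real.sqrt (Real.cos θ ^ 2 + (2 * t - 1) ^ 2 * Real.sin θ ^ 2)) MeasureTheory.volume 0 1 := by
    apply Continuous.intervalIntegrable
    apply Real.continuous_sqrt.comp
    exact continuous_const.add ((((continuous_const.mul continuous_id).sub continuous_const).pow 2).mul continuous_const)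
  have hμ : Real.cos θ ≤
      ∫ t in (0:ℝ)..1, Real.sqrt (Real.cos θ ^ 2 + (2 * t - 1) ^ 2 * Real.sin θ ^ 2) := by
    have h1 : Real.cos θ = ∫ _t in (0:ℝ)..1, Real.cos θ := by
      simp
    conv_lhs => rw [h1]
    apply intervalIntegral.integral_mono_on (by norm_num) intervalIntegrable_const hint
    intro t _
    calc Real.cos θ ≤ |Real.cos θ| := le_abs_self _
      _ = Real.sqrt (Real.cos θ ^ 2) := (Real.sqrt_sq_eq_abs _).symm
      _ ≤ _ := Real.sqrt_le_sqrt (le_add_of_nonneg_right (by positivity))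
  rw [hna, hnb, key]
  have hs : Real.sqrt (‖a‖ ^ 2 * ‖b‖ ^ 2) = ‖a‖ * ‖b‖ := by
    rw [← mul_pow, Real.sqrt_sq (by positivity)]
  rw [hs]
  have habr : ‖(inner ℂ a b : ℂ)‖ = r * (‖a‖ * ‖b‖) := by
    rw [hr]; field_simp
  rw [habr]
  exact mul_le_mul_of_nonneg_right (hcos ▸ hμ) (by positivity)
end

section
/- For any complex numbers c, d and any t ∈ (0,1), with r = min{t, 1-t}: (|c|+|d|)/2 - (1/(2r))·((1-t)|c| + t|d| - |(1-t)c + t·d|) ≤ |(c+d)/2|. -/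
theorem stmt13 (c d : ℂ) (t : ℝ) (ht : t ∈ Set.Ioo (0:ℝ) 1) :
    (‖c‖ + ‖d‖) / 2 -
      (1 / (2 * min t (1 - t))) *
        ((1 - t) * ‖c‖ + t * ‖d‖ -
          ‖(1 - (t : ℂ)) * c + (t : ℂ) * d‖) ≤
    ‖(c + d) / 2‖ := by
  obtain ⟨ht0, ht1⟩ := ht
  have habs : ‖(c + d) / 2‖ = ‖c + d‖ / 2 := by
    rw [norm_div]
    norm_num
  rw [habs]
  rcases le_total t (1 - t) with h | h
  · rw [min_eq_left h]
    have key : ‖(1 - (t : ℂ)) * c + (t : ℂ) * d‖ ≤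
        (1 - 2 * t) * ‖c‖ + t * ‖c + d‖ := by
      have heq : (1 - (t : ℂ)) * c + (t : ℂ) * d
          = ((1 - 2 * t : ℝ) : ℂ) * c + ((t : ℝ) : ℂ) * (c + d) := by
        push_cast; ring
      rw [heq]
      calc ‖((1 - 2 * t : ℝ) : ℂ) * c + ((t : ℝ) : ℂ) * (c + d)‖
          ≤ ‖((1 - 2 * t : ℝ) : ℂ) * c‖
            + ‖((t : ℝ) : ℂ) * (c + d)‖ := norm_add_le _ _
        _ = (1 - 2 * t) * ‖c‖ + t * ‖c + d‖ := by
            rw [norm_mul, norm_mul, Complex.norm_real, Real.norm_eq_abs, Complex.norm_real, Real.norm_eq_abs,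
              abs_of_nonneg (by linarith : (0:ℝ) ≤ 1 - 2 * t),
              abs_of_nonneg ht0.le]
    have hpos : (0:ℝ) < 1 / (2 * t) := by positivity
    have hineq : (1 / (2 * t)) * (t * (‖c‖ + ‖d‖ - ‖c + d‖))
        ≤ (1 / (2 * t)) * ((1 - t) * ‖c‖ + t * ‖d‖ -
          ‖(1 - (t : ℂ)) * c + (t : ℂ) * d‖) := by
      apply mul_le_mul_of_nonneg_left _ hpos.le
      linarith [key]
    have heval : (1 / (2 * t)) * (t * (‖c‖ + ‖d‖ - ‖c + d‖))
        = (‖c‖ + ‖d‖ - ‖c + d‖) / 2 := by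
      field_simp
    linarith [hineq, heval.symm.le]
  · rw [min_eq_right h]
    have key : ‖(1 - (t : ℂ)) * c + (t : ℂ) * d‖ ≤
        (2 * t - 1) * ‖d‖ + (1 - t) * ‖c + d‖ := by
      have heq : (1 - (t : ℂ)) * c + (t : ℂ) * d
          = ((2 * t - 1 : ℝ) : ℂ) * d + ((1 - t : ℝ) : ℂ) * (c + d) := by
        push_cast; ring
      rw [heq]
      calc ‖((2 * t - 1 : ℝ) : ℂ) * d + ((1 - t : ℝ) : ℂ) * (c + d)‖
          ≤ ‖((2 * t - 1 : ℝ) : ℂ) * d‖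
            + ‖((1 - t : ℝ) : ℂ) * (c + d)‖ := norm_add_le _ _
        _ = (2 * t - 1) * ‖d‖ + (1 - t) * ‖c + d‖ := by
            rw [norm_mul, norm_mul, Complex.norm_real, Real.norm_eq_abs, Complex.norm_real, Real.norm_eq_abs,
              abs_of_nonneg (by linarith : (0:ℝ) ≤ 2 * t - 1),
              abs_of_nonneg (by linarith : (0:ℝ) ≤ 1 - t)]
    have hpos : (0:ℝ) < 1 / (2 * (1 - t)) := by
      have : (0:ℝ) < 1 - t := by linarith
      positivity
    have hineq : (1 / (2 * (1 - t))) * ((1 - t) * (‖c‖ + ‖d‖ - ‖c + d‖))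
        ≤ (1 / (2 * (1 - t))) * ((1 - t) * ‖c‖ + t * ‖d‖ -
          ‖(1 - (t : ℂ)) * c + (t : ℂ) * d‖) := by
      apply mul_le_mul_of_nonneg_left _ hpos.le
      linarith [key]
    have heval : (1 / (2 * (1 - t))) * ((1 - t) * (‖c‖ + ‖d‖ - ‖c + d‖))
        = (‖c‖ + ‖d‖ - ‖c + d‖) / 2 := by
      have h1t : (1 - t) ≠ 0 := by linarith
      field_simp
    linarith [hineq, heval.symm.le]
end

section
/- Let f : ℝ → ℝ be convex, x, y ∈ ℝ, t ∈ [0,1], and r = min{t, 1-t}. Then f((1-t)x + t·y) + 2r·((f(x)+f(y))/2 - f((x+y)/2)) ≤ (1-t)·f(x) + t·f(y). -/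
theorem stmt14 (f : ℝ → ℝ) (hf : ConvexOn ℝ Set.univ f) (x y t : ℝ)
    (ht : t ∈ Set.Icc (0:ℝ) 1) :
    f ((1 - t) * x + t * y) +
      2 * min t (1 - t) * ((f x + f y) / 2 - f ((x + y) / 2)) ≤
    (1 - t) * f x + t * f y := by
  obtain ⟨ht0, ht1⟩ := ht
  rcases le_total t (1 - t) with h | h
  · rw [min_eq_left h]
    have key := hf.2 (Set.mem_univ x) (Set.mem_univ ((x + y) / 2))
      (by linarith : (0:ℝ) ≤ 1 - 2 * t) (by linarith : (0:ℝ) ≤ 2 * t) (by ring)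
    simp only [smul_eq_mul] at key
    have e : (1 - 2 * t) * x + 2 * t * ((x + y) / 2) = (1 - t) * x + t * y := by ring
    rw [e] at key
    linarith
  · rw [min_eq_right h]
    have key := hf.2 (Set.mem_univ y) (Set.mem_univ ((x + y) / 2))
      (by linarith : (0:ℝ) ≤ 2 * t - 1) (by linarith : (0:ℝ) ≤ 2 * (1 - t)) (by ring)
    simp only [smul_eq_mul] at key
    have e : (2 * t - 1) * y + 2 * (1 - t) * ((x + y) / 2) = (1 - t) * x + t * y := by ring
    rw [e] at key
    linarith
end

section
/- Let x, y be nonzero vectors in a complex Hilbert space, θ = arccos(|⟨x,y⟩|/(‖x‖‖y‖)), t ∈ (0,1), and r = min{t,1-t}. Define γ_t(θ) = 1 - (1/(2r))·(1 - √(cos²θ + (2t-1)²·sin²θ)). Then 0 ≤ γ_t(θ)·‖x‖·‖y‖ ≤ |⟨x,y⟩|. -/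
theorem stmt15 {E : Type*} [NormedAddCommGroup E] [InnerProductSpace ℂ E]
    (x y : E) (hx : x ≠ 0) (hy : y ≠ 0) (t : ℝ) (ht : t ∈ Set.Ioo (0:ℝ) 1) :
    let θ : ℝ := Real.arccos (‖(inner ℂ x y : ℂ)‖ / (‖x‖ * ‖y‖))
    let γ : ℝ := 1 - (1 / (2 * min t (1 - t))) *
      (1 - Real.sqrt (Real.cos θ ^ 2 + (2 * t - 1) ^ 2 * Real.sin θ ^ 2))
    0 ≤ γ * (‖x‖ * ‖y‖) ∧ γ * (‖x‖ * ‖y‖) ≤ ‖(inner ℂ x y : ℂ)‖ := by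
  intro θ γ
  obtain ⟨ht0, ht1⟩ := ht
  set r := min t (1 - t) with hr
  have hr0 : 0 < r := lt_min ht0 (by linarith)
  have hr2 : r ≤ 1/2 := by
    rcases le_total t (1-t) with h | h
    · rw [hr, min_eq_left h]; linarith
    · rw [hr, min_eq_right h]; linarith
  have hxy : 0 < ‖x‖ * ‖y‖ :=
    mul_pos (norm_pos_iff.mpr hx) (norm_pos_iff.mpr hy)
  set c := ‖(inner ℂ x y : ℂ)‖ / (‖x‖ * ‖y‖) with hc
  have hc0 : 0 ≤ c := div_nonneg (norm_nonneg _) hxy.le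
  have hc1 : c ≤ 1 := by
    rw [hc, div_le_one hxy]
    simpa using norm_inner_le_norm (𝕜 := ℂ) x y
  have hcos : Real.cos θ = c := Real.cos_arccos (by linarith) hc1
  have hsin : Real.sin θ ^ 2 = 1 - c ^ 2 := by
    show Real.sin (Real.arccos c) ^ 2 = 1 - c ^ 2
    rw [Real.sin_arccos, Real.sq_sqrt (by nlinarith)]
  have hsq : (2*t-1)^2 = (1-2*r)^2 := by
    rcases le_total t (1-t) with h | h
    · rw [hr, min_eq_left h]; ring
    · rw [hr, min_eq_right h]; ring
  set A := Real.sqrt (Real.cos θ ^ 2 + (2*t-1)^2 * Real.sin θ ^ 2) with hA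
  have hAval : A = Real.sqrt (c^2 + (1-2*r)^2 * (1-c^2)) := by
    rw [hA, hcos, hsin, hsq]
  have hAlow : 1 - 2*r ≤ A := by
    rw [hAval]
    calc 1 - 2*r = Real.sqrt ((1-2*r)^2) := (Real.sqrt_sq (by linarith)).symm
      _ ≤ _ := Real.sqrt_le_sqrt (by
          nlinarith [mul_nonneg (sq_nonneg c)
            (mul_nonneg hr0.le (by linarith : (0:ℝ) ≤ 1-r))])
  have hAup : A ≤ 1 - 2*r + 2*r*c := by
    rw [hAval]
    calc Real.sqrt (c^2 + (1-2*r)^2 * (1-c^2))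
        ≤ Real.sqrt ((1-2*r+2*r*c)^2) := Real.sqrt_le_sqrt (by
          nlinarith [mul_nonneg (mul_nonneg hr0.le (by linarith : (0:ℝ) ≤ 1-2*r))
            (mul_nonneg hc0 (by linarith : (0:ℝ) ≤ 1-c))])
      _ = 1 - 2*r + 2*r*c := Real.sqrt_sq (by nlinarith)
  have hinner : ‖(inner ℂ x y : ℂ)‖ = c * (‖x‖*‖y‖) := by
    rw [hc]; field_simp
  have hγ : γ = 1 - (1/(2*r)) * (1 - A) := rfl
  have h2r : (0:ℝ) < 2*r := by linarith
  have hγ0 : 0 ≤ γ := by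
    rw [hγ, sub_nonneg, one_div, inv_mul_le_iff₀ h2r]
    linarith
  have hγc : γ ≤ c := by
    rw [hγ, sub_le_iff_le_add]
    have : (1 - A)/(2*r) ≥ 1 - c := by
      rw [ge_iff_le, le_div_iff₀ h2r]; nlinarith
    rw [one_div, inv_mul_eq_div]
    linarith
  constructor
  · exact mul_nonneg hγ0 hxy.le
  · rw [hinner]
    exact mul_le_mul_of_nonneg_right hγc hxy.le
end

section
/- Let A, B be positive (semi-definite, bounded) operators on a complex Hilbert space with A invertible, and let A♯B = A^{1/2}(A^{-1/2} B A^{-1/2})^{1/2} A^{1/2} be the geometric mean. Then for every vector x, ⟨(A♯B)x, x⟩ ≤ √(⟨Ax, x⟩·⟨Bx, x⟩). -/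
set_option synthInstance.maxHeartbeats 1000000
set_option maxHeartbeats 1000000

open ContinuousLinearMap in
theorem stmt18 {H : Type*} [NormedAddCommGroup H] [InnerProductSpace ℂ H]
    [CompleteSpace H]
    (A B : H →L[ℂ] H) (hA : A.IsPositive) (hB : B.IsPositive) (hAinv : IsUnit A)
    (x : H) :
    let S : H →L[ℂ] H := CFC.sqrt A
    let Si : H →L[ℂ] H := Ring.inverse S
    ((inner ℂ ((S * CFC.sqrt (Si * B * Si) * S) x) x : ℂ)).re ≤
      Real.sqrt ((inner ℂ (A x) x : ℂ).re * (inner ℂ (B x) x : ℂ).re) := by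
  intro S Si
  have hA0 : (0 : H →L[ℂ] H) ≤ A := (nonneg_iff_isPositive A).mpr hA
  have hS0 : (0 : H →L[ℂ] H) ≤ S := CFC.sqrt_nonneg _
  have hSS : S * S = A := CFC.sqrt_mul_sqrt_self A hA0
  have hSsa : IsSelfAdjoint S := ((nonneg_iff_isPositive S).mp hS0).isSelfAdjoint
  set u := hAinv.unit with hudef
  have hu : (u : H →L[ℂ] H) = A := hAinv.unit_spec
  have h1 : S * (S * ↑u⁻¹) = 1 := by
    rw [← mul_assoc, hSS, ← hu, u.mul_inv]
  have h2 : (↑u⁻¹ * S) * S = 1 := by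
    rw [mul_assoc, hSS, ← hu, u.inv_mul]
  have h3 : (↑u⁻¹ : H →L[ℂ] H) * S = S * ↑u⁻¹ := by
    calc (↑u⁻¹ : H →L[ℂ] H) * S = (↑u⁻¹ * S) * (S * (S * ↑u⁻¹)) := by rw [h1, mul_one]
      _ = ((↑u⁻¹ * S) * S) * (S * ↑u⁻¹) := by simp only [mul_assoc]
      _ = S * ↑u⁻¹ := by rw [h2, one_mul]
  have hSu : IsUnit S := ⟨⟨S, S * ↑u⁻¹, h1, h3 ▸ h2⟩, rfl⟩
  have hSiS : Si * S = 1 := Ring.inverse_mul_cancel S hSu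
  have hSisa : IsSelfAdjoint Si := by
    show star Si = Si
    rw [show star Si = star (Ring.inverse S) from rfl, ← Ring.inverse_star, hSsa.star_eq]
  have hP : (Si * B * Si).IsPositive := by
    have := hB.conj_adjoint Si
    rwa [← ContinuousLinearMap.star_eq_adjoint, hSisa.star_eq] at this
  have hP0 : (0 : H →L[ℂ] H) ≤ Si * B * Si := (nonneg_iff_isPositive _).mpr hP
  set T : H →L[ℂ] H := CFC.sqrt (Si * B * Si) with hTdef
  have hT0 : (0 : H →L[ℂ] H) ≤ T := CFC.sqrt_nonneg _
  have hTT : T * T = Si * B * Si := CFC.sqrt_mul_sqrt_self _ hP0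
  have hTsa : IsSelfAdjoint T := ((nonneg_iff_isPositive T).mp hT0).isSelfAdjoint
  have hSsym := (isSelfAdjoint_iff_isSymmetric).mp hSsa
  have hTsym := (isSelfAdjoint_iff_isSymmetric).mp hTsa
  have hSisym := (isSelfAdjoint_iff_isSymmetric).mp hSisa
  set y := S x with hy
  have hSiSx : Si (S x) = x := by
    have : (Si * S) x = (1 : H →L[ℂ] H) x := by rw [hSiS]
    simpa [ContinuousLinearMap.mul_apply] using this
  have hLHS : (inner ℂ ((S * T * S) x) x : ℂ) = inner ℂ (T y) y := by
    rw [show (S * T * S) x = S (T (S x)) from rfl]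
    exact hSsym (T (S x)) x
  have hre : ∀ z : H, (inner ℂ z z : ℂ).re = ‖z‖ ^ 2 := fun z => by
    have := inner_self_eq_norm_sq (𝕜 := ℂ) z; simpa using this
  have key1 : (inner ℂ (A x) x : ℂ).re = ‖y‖ ^ 2 := by
    have : (inner ℂ (A x) x : ℂ) = inner ℂ y y := by
      rw [← hSS]; exact hSsym (S x) x
    rw [this, hre]
  have key2 : (inner ℂ (B x) x : ℂ).re = ‖T y‖ ^ 2 := by
    have : (inner ℂ (T y) (T y) : ℂ) = inner ℂ (B x) x := by
      calc (inner ℂ (T y) (T y) : ℂ) = inner ℂ (T (T y)) y := (hTsym (T y) y).symm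
        _ = inner ℂ ((Si * B * Si) y) y := by rw [show T (T y) = (T * T) y from rfl, hTT]
        _ = inner ℂ (Si (B (Si (S x)))) (S x) := rfl
        _ = inner ℂ (B (Si (S x))) (Si (S x)) := hSisym _ _
        _ = inner ℂ (B x) x := by rw [hSiSx]
    rw [← this, hre]
  rw [hLHS, key1, key2, Real.sqrt_mul (sq_nonneg _), Real.sqrt_sq (norm_nonneg _),
    Real.sqrt_sq (norm_nonneg _)]
  calc (inner ℂ (T y) y : ℂ).re ≤ ‖(inner ℂ (T y) y : ℂ)‖ := Complex.re_le_norm _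
    _ ≤ ‖T y‖ * ‖y‖ := norm_inner_le_norm _ _
    _ = ‖y‖ * ‖T y‖ := mul_comm _ _
end
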